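/- For each α = 1,2,3, on T³ one has ε_α(p) − ε_α(0) = −Σ_{s∈Z³} ε̂_α(s)·[1 − cos(s⁽¹⁾p⁽¹⁾)cos(s⁽²⁾p⁽²⁾)cos(s⁽³⁾p⁽³⁾)], and this quantity is strictly positive for every p ∈ T³ with p ≠ 0. -/

import Mathlib

open MeasureTheory Filter Metric Asymptotics
open scoped Real ENNReal InnerProductSpace

noncomputable section

abbrev V3 := Fin 3 → ℝ
abbrev Z3 := Fin 3 → ℤ

/-- The fundamental domain `(-π, π]³` representing the torus `𝕋³ = (-π, π]³`. -/
def cube : Set V3 := Set.univ.pi fun _ => Set.Ioc (-π) π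

/-- `|s| = |s⁽¹⁾| + |s⁽²⁾| + |s⁽³⁾|` on `ℤ³`. -/
def znorm (s : Z3) : ℤ := ∑ j, |s j|

/-- The Fourier series `∑_{s ∈ ℤ³} ê(s) e^{i(p,s)}`. -/
def epsC (e : Z3 → ℝ) (p : V3) : ℂ :=
  ∑' s : Z3, (e s : ℂ) * Complex.exp (Complex.I * ((∑ j, p j * (s j : ℝ) : ℝ) : ℂ))

/-- The dispersion function `ε(p)` (real-valued since `ê` is even). -/
def eps (e : Z3 → ℝ) (p : V3) : ℝ := (epsC e p).re

/-- The effective mass `m = 3 (−∑_s (s₁² + s₂² + s₃²) ê(s))⁻¹`. -/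
def mass (e : Z3 → ℝ) : ℝ :=
  3 * (-(∑' s : Z3, (∑ j, ((s j : ℝ)) ^ 2) * e s))⁻¹

/-- Hypothesis 2.1 of the paper, on the dispersion functions `ê`. -/
structure DispHyp (e : Z3 → ℝ) : Prop where
  sym : ∀ s t : Z3, znorm s = znorm t → e s = e t
  decay : ∃ a C : ℝ, 0 < a ∧ 0 < C ∧ ∀ s : Z3, |e s| ≤ C * Real.exp (-a * (znorm s : ℝ))
  neg : ∀ s : Z3, znorm s = 1 → e s < 0
  nonpos : ∀ s : Z3, 1 < znorm s → e s ≤ 0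

/-- `lcoef e₁ e₂ = m₂ / (m₁ + m₂)`, i.e. `l_{12}` in the paper's notation. -/
def lcoef (e1 e2 : Z3 → ℝ) : ℝ := mass e2 / (mass e1 + mass e2)

/-- `E_k^{(α)}(q) = ε_β(l_{γβ} k + q) + ε_γ(l_{βγ} k − q)` where `eb = ε̂_β`, `ec = ε̂_γ`. -/
def Ek (eb ec : Z3 → ℝ) (k q : V3) : ℝ :=
  eps eb (lcoef ec eb • k + q) + eps ec (lcoef eb ec • k - q)

/-!
Since `ê` depends only on `|s|`, it is invariant under every sign change
`s ↦ (σ₁s⁽¹⁾, σ₂s⁽²⁾, σ₃s⁽³⁾)`, so the Fourier series is unchanged when its phase `e^{i(p,s)}` is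
replaced by the average over all eight sign changes, which is `∏ⱼ cos(s⁽ʲ⁾p⁽ʲ⁾)`. Positivity
follows because every term `−ê(s)(1 − ∏ⱼ cos(s⁽ʲ⁾p⁽ʲ⁾))` is nonnegative, and the term at a unit
vector `s = eⱼ` with `p⁽ʲ⁾ ≠ 0` is `−ê(eⱼ)(1 − cos p⁽ʲ⁾) > 0`.
-/

lemma summable_prod_apply_of_nonneg {ι κ : Type*} [Fintype ι] {f : ι → κ → ℝ}
    (hf₀ : ∀ i k, 0 ≤ f i k) (hf : ∀ i, Summable (f i)) :
    Summable fun x : ι → κ => ∏ i, f i (x i) := by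
  classical
  refine summable_of_sum_le (c := ∏ i, ∑' k, f i k)
    (fun x => Finset.prod_nonneg fun i _ => hf₀ i _) fun S => ?_
  calc ∑ x ∈ S, ∏ i, f i (x i)
      ≤ ∑ x ∈ Fintype.piFinset fun i => S.image (· i), ∏ i, f i (x i) :=
        Finset.sum_le_sum_of_subset_of_nonneg
          (fun x hx => Fintype.mem_piFinset.2 fun i => Finset.mem_image_of_mem _ hx)
          (fun _ _ _ => Finset.prod_nonneg fun i _ => hf₀ i _)
    _ = ∏ i, ∑ k ∈ S.image (· i), f i k := (Finset.prod_univ_sum _ _).symm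
    _ ≤ ∏ i, ∑' k, f i k :=
        Finset.prod_le_prod (fun i _ => Finset.sum_nonneg fun k _ => hf₀ i k)
          fun i _ => (hf i).sum_le_tsum _ fun k _ => hf₀ i k

lemma summable_exp_neg_mul_abs_int {a : ℝ} (ha : 0 < a) :
    Summable fun n : ℤ => Real.exp (-a * |(n : ℝ)|) := by
  have h : Summable fun n : ℕ => Real.exp (n * -a) :=
    Real.summable_exp_nat_mul_iff.mpr (neg_neg_of_pos ha)
  refine summable_int_iff_summable_nat_and_neg.mpr ⟨?_, ?_⟩ <;>
    refine h.congr fun n => ?_ <;> simp [mul_comm]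

lemma summable_exp_neg_mul_sum_abs {ι : Type*} [Fintype ι] {a : ℝ} (ha : 0 < a) :
    Summable fun s : ι → ℤ => Real.exp (-a * ∑ j, |(s j : ℝ)|) := by
  refine (summable_prod_apply_of_nonneg (fun _ _ => (Real.exp_pos _).le)
    fun _ => summable_exp_neg_mul_abs_int ha).congr fun s => ?_
  rw [Finset.mul_sum, Real.exp_sum]

section LatticeFourierSeries

open Complex

variable {ι : Type*} [Fintype ι]

lemma Complex.ofReal_prod_cos_eq_average_exp [DecidableEq ι] (x : ι → ℝ) :
    ((∏ j, Real.cos (x j) : ℝ) : ℂ) =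
      (2 ^ Fintype.card ι : ℂ)⁻¹ *
        ∑ σ : ι → ℤˣ, cexp (I * ((∑ j, ((σ j : ℤ) : ℝ) * x j : ℝ) : ℂ)) := by
  have hcos : ∀ t : ℝ, (Real.cos t : ℂ) = (∑ u : ℤˣ, cexp (I * ((u : ℤ) : ℂ) * t)) / 2 := by
    intro t
    rw [UnitsInt.univ, Finset.sum_pair (by decide), Complex.ofReal_cos, Complex.cos]
    push_cast
    ring_nf
  simp_rw [Complex.ofReal_prod, hcos, Finset.prod_div_distrib, Fintype.prod_sum,
    Finset.prod_const, Finset.card_univ]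
  rw [div_eq_inv_mul, Finset.mul_sum, Finset.mul_sum]
  refine Finset.sum_congr rfl fun σ _ => ?_
  push_cast
  rw [Finset.mul_sum, Complex.exp_sum]
  simp_rw [mul_assoc]

theorem tsum_mul_exp_eq_tsum_mul_prod_cos {e : (ι → ℤ) → ℝ} (he : Summable e)
    (hsymm : ∀ (σ : ι → ℤˣ) (s : ι → ℤ), e (σ • s) = e s) (p : ι → ℝ) :
    ∑' s, (e s : ℂ) * cexp (I * ((∑ j, p j * (s j : ℝ) : ℝ) : ℂ)) =
      ((∑' s, e s * ∏ j, Real.cos ((s j : ℝ) * p j) : ℝ) : ℂ) := by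
  classical
  set F : (ι → ℤˣ) → (ι → ℤ) → ℂ := fun σ s =>
    (e s : ℂ) * cexp (I * ((∑ j, ((σ j : ℤ) : ℝ) * ((s j : ℝ) * p j) : ℝ) : ℂ))
  have hF : ∀ σ, ∑' s, (e s : ℂ) * cexp (I * ((∑ j, p j * (s j : ℝ) : ℝ) : ℂ)) =
      ∑' s, F σ s := by
    intro σ
    rw [← (MulAction.toPerm σ).tsum_eq]
    refine tsum_congr fun s => ?_
    simp only [MulAction.toPerm_apply, hsymm, F, Pi.smul_apply', Units.smul_def, smul_eq_mul]
    push_cast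
    congr 3
    exact Finset.sum_congr rfl fun j _ => by ring
  have hsum : ∀ σ, Summable (F σ) := fun σ =>
    .of_norm_bounded he.abs fun s => by
      rw [norm_mul, Complex.norm_exp_I_mul_ofReal, mul_one, Complex.norm_real, Real.norm_eq_abs]
  calc _ = (2 ^ Fintype.card ι : ℂ)⁻¹ * ∑ σ : ι → ℤˣ, ∑' s, F σ s := by
        simp only [← hF, Finset.sum_const, Finset.card_univ, Fintype.card_fun,
          Fintype.card_units_int, nsmul_eq_mul]
        push_cast
        field_simp
    _ = ∑' s, (e s : ℂ) * ((2 ^ Fintype.card ι : ℂ)⁻¹ *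
          ∑ σ : ι → ℤˣ, cexp (I * ((∑ j, ((σ j : ℤ) : ℝ) * ((s j : ℝ) * p j) : ℝ) : ℂ))) := by
        rw [← Summable.tsum_finsetSum fun σ _ => hsum σ, ← tsum_mul_left]
        refine tsum_congr fun s => ?_
        simp only [F, ← Finset.mul_sum]
        ring
    _ = _ := by
        rw [Complex.ofReal_tsum]
        refine tsum_congr fun s => ?_
        rw [Complex.ofReal_mul, Complex.ofReal_prod_cos_eq_average_exp]

lemma abs_prod_cos_le_one (x : ι → ℝ) : |∏ j, Real.cos (x j)| ≤ 1 := by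
  rw [Finset.abs_prod]
  exact Finset.prod_le_one (fun _ _ => abs_nonneg _) fun _ _ => Real.abs_cos_le_one _

lemma Summable.mul_of_abs_le {α : Type*} {f g : α → ℝ} {C : ℝ} (hf : Summable f)
    (hg : ∀ a, |g a| ≤ C) : Summable fun a => f a * g a :=
  .of_norm_bounded (hf.abs.mul_right C) fun a => by
    rw [Real.norm_eq_abs, abs_mul]
    exact mul_le_mul_of_nonneg_left (hg a) (abs_nonneg _)

lemma Real.cos_lt_one_of_mem_Ioc {x : ℝ} (hx : x ∈ Set.Ioc (-π) π) (hx0 : x ≠ 0) :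
    Real.cos x < 1 :=
  (Real.cos_le_one x).lt_of_ne fun h => hx0 <|
    (Real.cos_eq_one_iff_of_lt_of_lt (by linarith [hx.1, Real.pi_pos])
      (by linarith [hx.2, Real.pi_pos])).1 h

theorem tsum_mul_one_sub_prod_cos_neg [DecidableEq ι] {e : (ι → ℤ) → ℝ} (he : Summable e)
    (hnonpos : ∀ s, s ≠ 0 → e s ≤ 0) (hneg : ∀ j, e (Pi.single j 1) < 0) {p : ι → ℝ}
    (hp : ∀ j, p j ∈ Set.Ioc (-π) π) (hp0 : p ≠ 0) :
    ∑' s, e s * (1 - ∏ j, Real.cos ((s j : ℝ) * p j)) < 0 := by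
  obtain ⟨j, hj⟩ := Function.ne_iff.mp hp0
  have hterm : ∀ s : ι → ℤ, e s * (1 - ∏ i, Real.cos ((s i : ℝ) * p i)) ≤ 0 := by
    intro s
    rcases eq_or_ne s 0 with rfl | hs
    · simp
    · exact mul_nonpos_of_nonpos_of_nonneg (hnonpos s hs)
        (sub_nonneg.2 ((le_abs_self _).trans (abs_prod_cos_le_one _)))
  have hprod_single : ∏ i, Real.cos (((Pi.single j 1 : ι → ℤ) i : ℝ) * p i) = Real.cos (p j) := by
    rw [Finset.prod_eq_single j (fun i _ hi => by simp [hi]) (by simp)]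
    simp
  have hsingle :
      e (Pi.single j 1) * (1 - ∏ i, Real.cos (((Pi.single j 1 : ι → ℤ) i : ℝ) * p i)) < 0 := by
    rw [hprod_single]
    exact mul_neg_of_neg_of_pos (hneg j) (sub_pos.2 (Real.cos_lt_one_of_mem_Ioc (hp j) hj))
  rw [← tsum_zero]
  exact Summable.tsum_lt_tsum hterm hsingle
    (he.mul_of_abs_le (C := 2) fun s => by
      have := abs_le.1 (abs_prod_cos_le_one fun i => (s i : ℝ) * p i)
      exact abs_le.2 ⟨by linarith, by linarith⟩) summable_zero

end LatticeFourierSeries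

namespace DispHyp

variable {e : Z3 → ℝ}

lemma summable (he : DispHyp e) : Summable e := by
  obtain ⟨a, C, ha, -, hbound⟩ := he.decay
  refine .of_norm_bounded ((summable_exp_neg_mul_sum_abs ha).mul_left C) fun s => ?_
  simpa [znorm] using hbound s

lemma apply_units_smul (he : DispHyp e) (σ : Fin 3 → ℤˣ) (s : Z3) : e (σ • s) = e s :=
  have hu (u : ℤˣ) : |(u : ℤ)| = 1 := Int.isUnit_iff_abs_eq.mp u.isUnit
  he.sym _ _ <| by simp [znorm, Pi.smul_apply', Units.smul_def, abs_mul, hu]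

lemma nonpos_of_ne_zero (he : DispHyp e) {s : Z3} (hs : s ≠ 0) : e s ≤ 0 := by
  obtain ⟨j, hj⟩ := Function.ne_iff.mp hs
  have hs1 : 1 ≤ znorm s := (Int.one_le_abs hj).trans
    (Finset.single_le_sum (fun i _ => abs_nonneg (s i)) (Finset.mem_univ j))
  rcases hs1.eq_or_lt with h | h
  · exact (he.neg s h.symm).le
  · exact he.nonpos s h

lemma apply_single_neg (he : DispHyp e) (j : Fin 3) : e (Pi.single j 1) < 0 :=
  he.neg _ <| by
    rw [znorm, Finset.sum_eq_single j (fun i _ hi => by simp [hi]) (by simp)]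
    simp

end DispHyp

/-- `ε(p) − ε(0) = −∑_s ê(s)·[1 − cos(s⁽¹⁾p⁽¹⁾) cos(s⁽²⁾p⁽²⁾) cos(s⁽³⁾p⁽³⁾)]`,
and this quantity is strictly positive for every `p ∈ 𝕋³` with `p ≠ 0`. -/
theorem statement2 (e : Z3 → ℝ) (he : DispHyp e) :
    (∀ p : V3, epsC e p - epsC e 0 =
      -((∑' s : Z3, e s * (1 - Real.cos ((s 0 : ℝ) * p 0) * Real.cos ((s 1 : ℝ) * p 1) *
          Real.cos ((s 2 : ℝ) * p 2)) : ℝ) : ℂ)) ∧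
    (∀ p ∈ cube, p ≠ 0 →
      0 < -(∑' s : Z3, e s * (1 - Real.cos ((s 0 : ℝ) * p 0) * Real.cos ((s 1 : ℝ) * p 1) *
          Real.cos ((s 2 : ℝ) * p 2)))) := by
  have hprod (s : Z3) (p : V3) : ∏ j, Real.cos ((s j : ℝ) * p j) =
      Real.cos ((s 0 : ℝ) * p 0) * Real.cos ((s 1 : ℝ) * p 1) * Real.cos ((s 2 : ℝ) * p 2) :=
    Fin.prod_univ_three _
  have heps (p : V3) : epsC e p = ((∑' s, e s * ∏ j, Real.cos ((s j : ℝ) * p j) : ℝ) : ℂ) :=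
    tsum_mul_exp_eq_tsum_mul_prod_cos he.summable he.apply_units_smul p
  simp only [← hprod]
  refine ⟨fun p => ?_, fun p hp hp0 => neg_pos.2 <| tsum_mul_one_sub_prod_cos_neg he.summable
    (fun _ => he.nonpos_of_ne_zero) he.apply_single_neg (fun j => hp j trivial) hp0⟩
  rw [heps, heps]
  simp only [Pi.zero_apply, mul_zero, Real.cos_zero, Finset.prod_const_one, mul_one]
  rw [← Complex.ofReal_sub, ← Complex.ofReal_neg, ← tsum_neg, ← Summable.tsum_sub
    (he.summable.mul_of_abs_le fun s => abs_prod_cos_le_one _) he.summable]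
  exact congrArg _ (tsum_congr fun s => by ring)

end
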